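/- arXiv:1801.05524 — 2 statements merged into one kernel-verified Lean document; each statement's English description precedes it below -/
import Mathlib

section
/- For every integer l ≥ 1, the numbers a(m) = Σ_{b=0}^{⌊m/2⌋} C(m,2b)·(2b)!/b! satisfy the three-term recurrence a(2l+2) + 4·(2l)·(2l−1)·a(2l−2) = (8l+3)·a(2l). -/
/-- `aSeq m = Σ_{b=0}^{⌊m/2⌋} C(m,2b)·(2b)!/b!`. -/
def aSeq (m : ℕ) : ℕ :=
  ∑ b ∈ Finset.range (m / 2 + 1), Nat.choose m (2 * b) * (Nat.factorial (2 * b) / Nat.factorial b)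

/-!
The quotient `(2b)!/b!` is exact: it is the falling factorial `(2b)(2b - 1)⋯(b + 1)`, which grows
by the factor `2(2b + 1)` from `b` to `b + 1`. With this, Pascal's rule for `C(m + 2, 2b + 2)` and
`(2b + 1) · C(m + 1, 2b + 1) = (m + 1) · C(m, 2b)` give `a(m + 2) = a(m + 1) + 2(m + 1) a(m)`.
Applying it three times and eliminating `a(m + 1)` and `a(m + 3)` yields
`a(m + 4) + 4(m + 2)(m + 1) a(m) = (4m + 11) a(m + 2)`; take `m = 2l - 2`.
-/

open Finset Nat

def aSeqTerm (m b : ℕ) : ℕ := m.choose (2 * b) * (2 * b).descFactorial b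

lemma aSeq_eq_sum_range {m n : ℕ} (hn : m / 2 < n) :
    aSeq m = ∑ b ∈ range n, aSeqTerm m b := by
  refine (sum_subset (range_subset_range.2 hn) fun b _ hb => ?_).trans (sum_congr rfl fun b _ => ?_)
  · simp only [mem_range, not_lt] at hb
    simp [choose_eq_zero_of_lt (show m < 2 * b by omega)]
  · rw [aSeqTerm, descFactorial_eq_div (by omega), show 2 * b - b = b by omega]

lemma descFactorial_two_mul_succ (c : ℕ) :
    (2 * (c + 1)).descFactorial (c + 1) = 2 * (2 * c + 1) * (2 * c).descFactorial c := by
  have h := succ_descFactorial (2 * c) c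
  rw [show 2 * c + 1 - c = c + 1 by omega] at h
  rw [show 2 * (c + 1) = 2 * c + 1 + 1 by ring, succ_descFactorial_succ,
    show 2 * c + 1 + 1 = 2 * (c + 1) by ring, mul_assoc, h, mul_assoc]

lemma aSeqTerm_add_two_succ (m c : ℕ) :
    aSeqTerm (m + 2) (c + 1) = aSeqTerm (m + 1) (c + 1) + 2 * (m + 1) * aSeqTerm m c := by
  have pascal : (m + 2).choose (2 * (c + 1))
      = (m + 1).choose (2 * c + 1) + (m + 1).choose (2 * (c + 1)) :=
    choose_succ_succ' (m + 1) (2 * c + 1)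
  have absorb := add_one_mul_choose_eq m (2 * c)
  simp only [aSeqTerm, pascal, descFactorial_two_mul_succ]
  grind

lemma aSeq_add_two (m : ℕ) : aSeq (m + 2) = aSeq (m + 1) + 2 * (m + 1) * aSeq m := by
  rw [aSeq_eq_sum_range (n := m / 2 + 2) (by omega), aSeq_eq_sum_range (n := m / 2 + 2) (by omega),
    aSeq_eq_sum_range (n := m / 2 + 1) (by omega), sum_range_succ', sum_range_succ' _ (m / 2 + 1)]
  simp only [aSeqTerm_add_two_succ, sum_add_distrib, ← mul_sum]
  simp only [aSeqTerm, mul_zero, choose_zero_right, descFactorial_zero]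
  ring

lemma aSeq_add_four (m : ℕ) :
    aSeq (m + 4) + 4 * (m + 2) * (m + 1) * aSeq m = (4 * m + 11) * aSeq (m + 2) := by
  rw [aSeq_add_two (m + 2), aSeq_add_two (m + 1), aSeq_add_two m]
  ring

theorem aSeq_even_recurrence (l : ℕ) (hl : 1 ≤ l) :
    aSeq (2 * l + 2) + 4 * (2 * l) * (2 * l - 1) * aSeq (2 * l - 2)
      = (8 * l + 3) * aSeq (2 * l) := by
  have h := aSeq_add_four (2 * l - 2)
  rwa [show 2 * l - 2 + 4 = 2 * l + 2 by omega, show 2 * l - 2 + 2 = 2 * l by omega,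
    show 2 * l - 2 + 1 = 2 * l - 1 by omega, show 4 * (2 * l - 2) + 11 = 8 * l + 3 by omega] at h
end

section
/- For all integers l, p, q with 1 ≤ l ≤ q−1 and q < p, the identity (2l+2)(2l+1)·β(2l+2,p,q) + 4(p−l)(p−l+1)(q−l)(q−l+1)·β(2l−2,p,q) = (8l+3)(p−l)(q−l)·β(2l,p,q) holds. -/
/-- `beta k p q` : for `k = 2l` even it is `C(n-2l, p-l)·C(n, 2l)·aSeq(2l)` when
`l ≤ min(p,q)` and `0` otherwise; for `k = 2l+1` odd it is
`C(n-2l-1, p-l-1)·C(n, 2l+1)·aSeq(2l+1)` when `l ≤ q` and `l+1 ≤ p`, and `0` otherwise.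
Here `n = p + q`. -/
def beta (k p q : ℕ) : ℕ :=
  if k % 2 = 0 then
    if k / 2 ≤ p ∧ k / 2 ≤ q then
      Nat.choose (p + q - 2 * (k / 2)) (p - k / 2) * Nat.choose (p + q) (2 * (k / 2))
        * aSeq (2 * (k / 2))
    else 0
  else
    if k / 2 ≤ q ∧ k / 2 + 1 ≤ p then
      Nat.choose (p + q - (2 * (k / 2) + 1)) (p - (k / 2 + 1))
        * Nat.choose (p + q) (2 * (k / 2) + 1) * aSeq (2 * (k / 2) + 1)
    else 0

/-- Recursive form of `(2b)!/b!`. -/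
def Taux : ℕ → ℕ
  | 0 => 1
  | b+1 => 2*(2*b+1)*Taux b

lemma Taux_mul_fact (b : ℕ) : Taux b * Nat.factorial b = Nat.factorial (2*b) := by
  induction b with
  | zero => rfl
  | succ b ih =>
    rw [show 2*(b+1) = 2*b+1+1 by ring, Nat.factorial_succ, Nat.factorial_succ,
      Nat.factorial_succ, Taux]
    calc 2*(2*b+1)*Taux b * ((b+1)*Nat.factorial b)
        = (2*(b+1))*((2*b+1)*(Taux b * Nat.factorial b)) := by ring
      _ = _ := by rw [ih]; ring

lemma Taux_div (b : ℕ) : Nat.factorial (2*b) / Nat.factorial b = Taux b :=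
  Nat.div_eq_of_eq_mul_left (Nat.factorial_pos b) (Taux_mul_fact b).symm

def Saux (m : ℕ) : ℕ := ∑ b ∈ Finset.range (m+1), Nat.choose m (2*b) * Taux b

lemma aSeq_eq_Saux (m : ℕ) : aSeq m = Saux m := by
  unfold aSeq Saux
  simp only [Taux_div]
  apply Finset.sum_subset (Finset.range_subset_range.2 (by omega))
  intro b _ hb
  simp only [Finset.mem_range, not_lt] at hb
  rw [Nat.choose_eq_zero_of_lt (by omega), zero_mul]

lemma Saux_rec (m : ℕ) : Saux (m+2) = Saux (m+1) + 2*(m+1)*Saux m := by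
  have key : ∀ b, Nat.choose (m+2) (2*(b+1)) * Taux (b+1)
      = 2*(m+1)*(Nat.choose m (2*b) * Taux b) + Nat.choose (m+1) (2*(b+1)) * Taux (b+1) := by
    intro b
    have hpas : Nat.choose (m+2) (2*(b+1))
        = Nat.choose m (2*b) + Nat.choose m (2*b+1) + Nat.choose (m+1) (2*(b+1)) := by
      rw [show 2*(b+1) = (2*b+1)+1 by ring, show m+2 = (m+1)+1 by ring,
        Nat.choose_succ_succ (m+1) (2*b+1), show (2*b+1) = (2*b)+1 by rfl,
        Nat.choose_succ_succ m (2*b)]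
    have hmain : (Nat.choose m (2*b) + Nat.choose m (2*b+1))*(2*b+1)
        = (m+1)*Nat.choose m (2*b) := by
      rcases le_or_gt (2*b) m with h | h
      · obtain ⟨r, rfl⟩ : ∃ r, m = 2*b + r := ⟨m - 2*b, by omega⟩
        have h1 := Nat.choose_succ_right_eq (2*b+r) (2*b)
        rw [Nat.add_sub_cancel_left] at h1
        calc (Nat.choose (2*b+r) (2*b) + Nat.choose (2*b+r) (2*b+1))*(2*b+1)
            = Nat.choose (2*b+r) (2*b)*(2*b+1) + Nat.choose (2*b+r) (2*b+1)*(2*b+1) := by ring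
          _ = Nat.choose (2*b+r) (2*b)*(2*b+1) + Nat.choose (2*b+r) (2*b)*r := by rw [h1]
          _ = (2*b+r+1)*Nat.choose (2*b+r) (2*b) := by ring
      · rw [Nat.choose_eq_zero_of_lt h, Nat.choose_eq_zero_of_lt (by omega)]; ring
    have hT : Taux (b+1) = 2*(2*b+1)*Taux b := rfl
    calc Nat.choose (m+2) (2*(b+1)) * Taux (b+1)
        = (Nat.choose m (2*b) + Nat.choose m (2*b+1)) * Taux (b+1)
            + Nat.choose (m+1) (2*(b+1)) * Taux (b+1) := by rw [hpas]; ring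
      _ = ((Nat.choose m (2*b) + Nat.choose m (2*b+1))*(2*b+1))*(2*Taux b)
            + Nat.choose (m+1) (2*(b+1)) * Taux (b+1) := by rw [hT]; ring
      _ = _ := by rw [hmain]; ring
  have e1 : Saux (m+2)
      = ∑ b ∈ Finset.range (m+2), Nat.choose (m+2) (2*(b+1)) * Taux (b+1) + 1 := by
    unfold Saux
    rw [Finset.sum_range_succ' (fun b => Nat.choose (m+2) (2*b) * Taux b) (m+2)]
    simp [Taux]
  rw [e1, Finset.sum_congr rfl (fun b _ => key b), Finset.sum_add_distrib]
  have e2 : ∑ b ∈ Finset.range (m+2), 2*(m+1)*(Nat.choose m (2*b) * Taux b)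
      = 2*(m+1)*Saux m := by
    rw [← Finset.mul_sum]
    unfold Saux
    rw [Finset.sum_range_succ, Nat.choose_eq_zero_of_lt (by omega), zero_mul, add_zero]
  have e3 : ∑ b ∈ Finset.range (m+2), Nat.choose (m+1) (2*(b+1)) * Taux (b+1) + 1
      = Saux (m+1) := by
    have t1 : ∑ b ∈ Finset.range (m+3), Nat.choose (m+1) (2*b) * Taux b
        = ∑ b ∈ Finset.range (m+2), Nat.choose (m+1) (2*(b+1)) * Taux (b+1) + 1 := by
      rw [Finset.sum_range_succ' (fun b => Nat.choose (m+1) (2*b) * Taux b) (m+2)]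
      simp [Taux]
    have t2 : ∑ b ∈ Finset.range (m+3), Nat.choose (m+1) (2*b) * Taux b = Saux (m+1) := by
      unfold Saux
      rw [show m+3 = (m+2)+1 from rfl, Finset.sum_range_succ,
        Nat.choose_eq_zero_of_lt (by omega), zero_mul, add_zero]
    rw [← t1, t2]
  omega

lemma aSeq_rec (m : ℕ) : aSeq (m+2) = aSeq (m+1) + 2*(m+1)*aSeq m := by
  simp only [aSeq_eq_Saux]; exact Saux_rec m

lemma aSeq_key (m : ℕ) :
    aSeq (2*m+4) + 4*(2*m+2)*(2*m+1)*aSeq (2*m) = (8*m+11)*aSeq (2*m+2) := by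
  have h0 := aSeq_rec (2*m)
  have h1 := aSeq_rec (2*m+1)
  have h2 := aSeq_rec (2*m+2)
  rw [show 2*m+1+2 = 2*m+3 by ring, show 2*m+1+1 = 2*m+2 by ring] at h1
  rw [show 2*m+2+2 = 2*m+4 by ring, show 2*m+2+1 = 2*m+3 by ring] at h2
  rw [h2, h1, h0]; ring

lemma beta_even (k p q : ℕ) (h1 : k ≤ p) (h2 : k ≤ q) :
    beta (2*k) p q
      = Nat.choose (p+q-2*k) (p-k) * Nat.choose (p+q) (2*k) * aSeq (2*k) := by
  have hm : 2*k % 2 = 0 := Nat.mul_mod_right 2 k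
  have hd : 2*k / 2 = k := Nat.mul_div_cancel_left k (by norm_num)
  rw [beta, if_pos hm, hd, if_pos ⟨h1, h2⟩]

lemma choose_row2 (M j : ℕ) :
    Nat.choose (M+2) (j+1) * (j+1) * (M+1-j) = Nat.choose M j * (M+1) * (M+2) := by
  have a := Nat.add_one_mul_choose_eq (M+1) j
  have b := Nat.choose_mul_succ_eq M j
  calc Nat.choose (M+2) (j+1) * (j+1) * (M+1-j)
      = ((M+2) * Nat.choose (M+1) j) * (M+1-j) := by rw [← a]
    _ = (M+2) * (Nat.choose (M+1) j * (M+1-j)) := by ring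
    _ = (M+2) * (Nat.choose M j * (M+1)) := by rw [← b]
    _ = _ := by ring

theorem beta_even_parity_recurrence (l p q : ℕ) (hl : 1 ≤ l) (hlq : l + 1 ≤ q) (hqp : q < p) :
    (2 * l + 2) * (2 * l + 1) * beta (2 * l + 2) p q
        + 4 * (p - l) * (p - l + 1) * (q - l) * (q - l + 1) * beta (2 * l - 2) p q
      = (8 * l + 3) * (p - l) * (q - l) * beta (2 * l) p q := by
  obtain ⟨m, rfl⟩ : ∃ m, l = m + 1 := ⟨l-1, by omega⟩
  obtain ⟨d, rfl⟩ : ∃ d, q = m + 2 + d := ⟨q - (m+2), by omega⟩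
  obtain ⟨e, rfl⟩ : ∃ e, p = m + 3 + d + e := ⟨p - (m+3+d), by omega⟩
  rw [show 2*(m+1)+2 = 2*(m+2) by ring, show 2*(m+1)-2 = 2*m by omega]
  rw [beta_even (m+2) _ _ (by omega) (by omega), beta_even m _ _ (by omega) (by omega),
    beta_even (m+1) _ _ (by omega) (by omega)]
  simp only [show m+3+d+e + (m+2+d) - 2*(m+2) = 1+2*d+e from by omega]
  simp only [show m+3+d+e + (m+2+d) - 2*m = 5+2*d+e from by omega]
  simp only [show m+3+d+e + (m+2+d) - 2*(m+1) = 3+2*d+e from by omega]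
  simp only [show m+3+d+e - (m+2) = 1+d+e from by omega]
  simp only [show m+3+d+e - (m+1) = 2+d+e from by omega]
  simp only [show m+3+d+e - m = 3+d+e from by omega]
  simp only [show m+2+d - (m+1) = 1+d from by omega]
  simp only [show m+3+d+e + (m+2+d) = 2*m+5+2*d+e from by omega]
  simp only [show 2*(m+2) = 2*m+4 from by ring, show 2*(m+1) = 2*m+2 from by ring]
  set n := 2*m+5+2*d+e with hn
  have h1 : Nat.choose n (2*m+4) * (2*m+4) * (2*m+3)
      = Nat.choose n (2*m+2) * (3+2*d+e) * (2+2*d+e) := by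
    have a1 := Nat.choose_succ_right_eq n (2*m+3)
    have a2 := Nat.choose_succ_right_eq n (2*m+2)
    rw [show 2*m+3+1 = 2*m+4 by ring, show n - (2*m+3) = 2+2*d+e from by omega] at a1
    rw [show 2*m+2+1 = 2*m+3 by ring, show n - (2*m+2) = 3+2*d+e from by omega] at a2
    calc Nat.choose n (2*m+4) * (2*m+4) * (2*m+3)
        = (Nat.choose n (2*m+3) * (2*m+3)) * (2+2*d+e) := by rw [a1]; ring
      _ = _ := by rw [a2]
  have h2 : Nat.choose n (2*m+2) * (2*m+2) * (2*m+1)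
      = Nat.choose n (2*m) * (5+2*d+e) * (4+2*d+e) := by
    have a1 := Nat.choose_succ_right_eq n (2*m+1)
    have a2 := Nat.choose_succ_right_eq n (2*m)
    rw [show 2*m+1+1 = 2*m+2 by ring, show n - (2*m+1) = 4+2*d+e from by omega] at a1
    rw [show n - (2*m) = 5+2*d+e from by omega] at a2
    calc Nat.choose n (2*m+2) * (2*m+2) * (2*m+1)
        = (Nat.choose n (2*m+1) * (2*m+1)) * (4+2*d+e) := by rw [a1]; ring
      _ = _ := by rw [a2]
  have h3 : Nat.choose (3+2*d+e) (2+d+e) * (2+d+e) * (1+d)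
      = Nat.choose (1+2*d+e) (1+d+e) * (2+2*d+e) * (3+2*d+e) := by
    have := choose_row2 (1+2*d+e) (1+d+e)
    rw [show 1+2*d+e+2 = 3+2*d+e by ring, show 1+d+e+1 = 2+d+e by ring,
      show 1+2*d+e+1-(1+d+e) = 1+d from by omega, show 1+2*d+e+1 = 2+2*d+e by ring] at this
    exact this
  have h4 : Nat.choose (5+2*d+e) (3+d+e) * (3+d+e) * (2+d)
      = Nat.choose (3+2*d+e) (2+d+e) * (4+2*d+e) * (5+2*d+e) := by
    have := choose_row2 (3+2*d+e) (2+d+e)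
    rw [show 3+2*d+e+2 = 5+2*d+e by ring, show 2+d+e+1 = 3+d+e by ring,
      show 3+2*d+e+1-(2+d+e) = 2+d from by omega, show 3+2*d+e+1 = 4+2*d+e by ring] at this
    exact this
  have hk := aSeq_key m
  zify at h1 h2 h3 h4 hk ⊢
  linear_combination
    ((Nat.choose (1+2*d+e) (1+d+e) : ℤ) * (aSeq (2*m+4) : ℤ)) * h1
    - ((Nat.choose n (2*m+2) : ℤ) * (aSeq (2*m+4) : ℤ)) * h3
    + (4 * ((2+d+e)*(1+d) : ℤ) * (Nat.choose n (2*m) : ℤ) * (aSeq (2*m) : ℤ)) * h4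
    - (4 * ((2+d+e)*(1+d) : ℤ) * (aSeq (2*m) : ℤ) * (Nat.choose (3+2*d+e) (2+d+e) : ℤ)) * h2
    + (((2+d+e)*(1+d) : ℤ) * (Nat.choose n (2*m+2) : ℤ) * (Nat.choose (3+2*d+e) (2+d+e) : ℤ)) * hk
end
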